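/- (Hubbard–Stratonovich identity for the Curie–Weiss partition function.) For every integer N ≥ 1, every x ∈ ℝ and every t > 0, one has ∑_{σ ∈ {−1,1}^N} exp( (t/(2N)) (∑_{i=1}^N σ_i)² + x ∑_{i=1}^N σ_i ) = √(N/(2π t)) · ∫_ℝ exp( −N (x−y)²/(2t) ) · (2 cosh y)^N dy. -/

import Mathlib

/-!
Each Boltzmann weight `exp (t/(2N) s² + x s)` with `s = ∑ σᵢ` is itself a Gaussian integral
`√(N/(2πt)) ∫ exp (-N(x-y)²/(2t) + s y) dy`: completing the square linearizes the quadratic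
interaction in `s`. After exchanging the finite sum with the integral, the spins decouple and
`∑_σ exp ((∑ σᵢ) y) = (2 cosh y)^N`.
-/

open Real MeasureTheory

lemma neg_mul_sub_sq_add_mul_eq {c : ℝ} (hc : 0 < c) (x s y : ℝ) :
    -c * (x - y) ^ 2 + s * y = -c * (y - (x + s / (2 * c))) ^ 2 + (s ^ 2 / (4 * c) + x * s) := by
  field_simp
  ring

lemma integrable_exp_neg_mul_sub_sq_add_mul {c : ℝ} (hc : 0 < c) (x s : ℝ) :
    Integrable fun y : ℝ => exp (-c * (x - y) ^ 2 + s * y) := by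
  simp_rw [neg_mul_sub_sq_add_mul_eq hc, exp_add]
  exact ((integrable_exp_neg_mul_sq hc).comp_sub_right _).mul_const _

lemma integral_exp_neg_mul_sub_sq_add_mul {c : ℝ} (hc : 0 < c) (x s : ℝ) :
    ∫ y : ℝ, exp (-c * (x - y) ^ 2 + s * y) = √(π / c) * exp (s ^ 2 / (4 * c) + x * s) := by
  simp_rw [neg_mul_sub_sq_add_mul_eq hc, exp_add, integral_mul_const]
  rw [integral_sub_right_eq_self (fun y => exp (-c * y ^ 2)), integral_gaussian]

lemma exp_sq_div_add_mul_eq_integral {c : ℝ} (hc : 0 < c) (x s : ℝ) :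
    exp (s ^ 2 / (4 * c) + x * s) = √(c / π) * ∫ y : ℝ, exp (-c * (x - y) ^ 2 + s * y) := by
  rw [integral_exp_neg_mul_sub_sq_add_mul hc, ← mul_assoc, ← sqrt_mul (by positivity),
    div_mul_div_cancel₀ pi_ne_zero, div_self hc.ne', sqrt_one, one_mul]

lemma two_mul_cosh_eq_sum (y : ℝ) :
    2 * cosh y = ∑ a : ({-1, 1} : Finset ℝ), exp (a * y) := by
  rw [Finset.sum_coe_sort _ (fun a : ℝ => exp (a * y)),
    Finset.sum_pair (by norm_num : (-1 : ℝ) ≠ 1), cosh_eq, neg_one_mul, one_mul]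
  ring

lemma two_mul_cosh_pow_eq_sum (n : ℕ) (y : ℝ) :
    (2 * cosh y) ^ n = ∑ σ : Fin n → ({-1, 1} : Finset ℝ), exp ((∑ i, (σ i : ℝ)) * y) := by
  simp_rw [two_mul_cosh_eq_sum, Fintype.sum_pow, Finset.sum_mul, exp_sum]

theorem hubbard_stratonovich (N : ℕ) (hN : 1 ≤ N) (x t : ℝ) (ht : 0 < t) :
    ∑ σ : Fin N → ({-1, 1} : Finset ℝ),
        Real.exp ((t / (2 * N)) * (∑ i, (σ i : ℝ)) ^ 2 + x * ∑ i, (σ i : ℝ))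
      = Real.sqrt ((N : ℝ) / (2 * π * t)) *
          ∫ y : ℝ, Real.exp (-(N : ℝ) * (x - y) ^ 2 / (2 * t)) * (2 * Real.cosh y) ^ N := by
  have hN' : (0 : ℝ) < N := by exact_mod_cast hN
  have hc : 0 < (N : ℝ) / (2 * t) := by positivity
  have h_integrand (y : ℝ) : exp (-(N : ℝ) * (x - y) ^ 2 / (2 * t)) * (2 * cosh y) ^ N
      = ∑ σ : Fin N → ({-1, 1} : Finset ℝ),
          exp (-(N / (2 * t)) * (x - y) ^ 2 + (∑ i, (σ i : ℝ)) * y) := by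
    simp_rw [two_mul_cosh_pow_eq_sum, Finset.mul_sum, ← exp_add]
    ring_nf
  simp_rw [h_integrand]
  rw [integral_finsetSum _ fun σ _ => integrable_exp_neg_mul_sub_sq_add_mul hc x _,
    Finset.mul_sum]
  refine Finset.sum_congr rfl fun σ _ => ?_
  rw [show (N : ℝ) / (2 * π * t) = N / (2 * t) / π by ring,
    ← exp_sq_div_add_mul_eq_integral hc]
  congr 1
  field_simp
  ring
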